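/- Let n ≥ 1, let L ⊆ S be a closed set with at least three points, and Ω = S \ L. Let Γ be a group of bijections of S such that every γ ∈ Γ satisfies γ(L) = L and admits a multiplier λ_γ : S → (0,∞) with ‖γx − γy‖ = λ_γ(x)^{1/2} λ_γ(y)^{1/2} ‖x − y‖ for all x,y ∈ S. Let D ⊆ Ω satisfy ⋃_{γ∈Γ} γ(D) = Ω, and let u : Ω → ℝ satisfy the invariance e^{u(x)} = e^{u(γx)} · λ_γ(x) for all γ ∈ Γ, x ∈ Ω. If there is C₀ ≥ 1 such that 1/(C₀·dist(x,L)) ≤ e^{u(x)} ≤ C₀/dist(x,L) for all x ∈ D, then there is C ≥ 1 (depending only on L and C₀) such that 1/(C·dist(x,L)) ≤ e^{u(x)} ≤ C/dist(x,L) for all x ∈ Ω. (Lemma 3.4: the two-sided bound on the conformal factor of an invariant metric propagates from a fundamental region to the whole domain of discontinuity.) -/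

import Mathlib

/-- Lemma 3.4: the two-sided bound `e^u ≍ 1/dist(·,L)` on the conformal factor of a
`Γ`-invariant metric propagates from a fundamental region `D` (whose `Γ`-translates
cover `Ω = S \ L`) to the whole domain of discontinuity `Ω`.  Here `Γ` is a group of
Möbius transformations of the sphere, each preserving the closed set `L` (with at
least three points) and admitting a multiplier `λ_γ = |γ′|_s`. -/
theorem lemma_3_4 (n : ℕ) (hn : 1 ≤ n)
    (L : Set (Metric.sphere (0 : EuclideanSpace ℝ (Fin (n + 1))) 1))
    (hLclosed : IsClosed L)
    (hL3 : ∃ a b c, a ∈ L ∧ b ∈ L ∧ c ∈ L ∧ a ≠ b ∧ a ≠ c ∧ b ≠ c)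
    (Γ : Subgroup (Equiv.Perm (Metric.sphere (0 : EuclideanSpace ℝ (Fin (n + 1))) 1)))
    (lam : Equiv.Perm (Metric.sphere (0 : EuclideanSpace ℝ (Fin (n + 1))) 1) →
      Metric.sphere (0 : EuclideanSpace ℝ (Fin (n + 1))) 1 → ℝ)
    (hlam_pos : ∀ γ ∈ Γ, ∀ x, 0 < lam γ x)
    (hmult : ∀ γ ∈ Γ, ∀ x y,
      dist (γ x) (γ y) = Real.sqrt (lam γ x) * Real.sqrt (lam γ y) * dist x y)
    (hLinv : ∀ γ ∈ Γ, (γ : Equiv.Perm _) '' L = L)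
    (D : Set (Metric.sphere (0 : EuclideanSpace ℝ (Fin (n + 1))) 1))
    (hDsub : D ⊆ Lᶜ)
    (hcover : (⋃ γ ∈ Γ, (γ : Equiv.Perm _) '' D) = Lᶜ)
    (u : Metric.sphere (0 : EuclideanSpace ℝ (Fin (n + 1))) 1 → ℝ)
    (hinv : ∀ γ ∈ Γ, ∀ x ∈ Lᶜ, Real.exp (u x) = Real.exp (u (γ x)) * lam γ x)
    (C₀ : ℝ) (hC₀ : 1 ≤ C₀)
    (hbound : ∀ x ∈ D,
      1 / (C₀ * Metric.infDist x L) ≤ Real.exp (u x) ∧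
      Real.exp (u x) ≤ C₀ / Metric.infDist x L) :
    ∃ C ≥ (1 : ℝ), ∀ x ∈ Lᶜ,
      1 / (C * Metric.infDist x L) ≤ Real.exp (u x) ∧
      Real.exp (u x) ≤ C / Metric.infDist x L := by
  classical
  obtain ⟨a, b, c, haL, hbL, hcL, hab, hac, hbc⟩ := hL3
  have hδab : 0 < dist a b := dist_pos.mpr hab
  have hδac : 0 < dist a c := dist_pos.mpr hac
  have hδbc : 0 < dist b c := dist_pos.mpr hbc
  set δ : ℝ := min (min (dist a b) (dist a c)) (dist b c) with hδdef
  have hδpos : 0 < δ := lt_min (lt_min hδab hδac) hδbc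
  set K : ℝ := max (16 / δ) 1 with hKdef
  have hK1 : (1 : ℝ) ≤ K := le_max_right _ _
  have hKδ : 16 / δ ≤ K := le_max_left _ _
  have hKpos : 0 < K := lt_of_lt_of_le one_pos hK1
  have hLne : L.Nonempty := ⟨a, haL⟩
  have hLcpt : IsCompact L := hLclosed.isCompact
  have hdist2 : ∀ z w : Metric.sphere (0 : EuclideanSpace ℝ (Fin (n + 1))) 1,
      dist z w ≤ 2 := by
    intro z w
    have hz : ‖(z : EuclideanSpace ℝ (Fin (n + 1)))‖ = 1 := mem_sphere_zero_iff_norm.mp z.2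
    have hw : ‖(w : EuclideanSpace ℝ (Fin (n + 1)))‖ = 1 := mem_sphere_zero_iff_norm.mp w.2
    rw [Subtype.dist_eq, dist_eq_norm]
    calc ‖(z : EuclideanSpace ℝ (Fin (n + 1))) - w‖
        ≤ ‖(z : EuclideanSpace ℝ (Fin (n + 1)))‖ + ‖(w : EuclideanSpace ℝ (Fin (n + 1)))‖ :=
          norm_sub_le _ _
      _ = 2 := by rw [hz, hw]; norm_num
  -- Key Lemma A: for every γ ∈ Γ and every point y,
  -- infDist (γ y) L ≤ K * lam γ y * infDist y L
  have keyA : ∀ γ ∈ Γ, ∀ y, Metric.infDist (γ y) L ≤ K * lam γ y * Metric.infDist y L := by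
    intro γ hγ y
    obtain ⟨p, hpL, hpd⟩ := hLcpt.exists_infDist_eq_dist hLne y
    set d := Metric.infDist y L with hd
    have hd0 : 0 ≤ d := Metric.infDist_nonneg
    set s : Metric.sphere (0 : EuclideanSpace ℝ (Fin (n + 1))) 1 → ℝ :=
      fun z => Real.sqrt (lam γ z) with hsdef
    have hs : ∀ z, 0 < s z := fun z => Real.sqrt_pos.mpr (hlam_pos γ hγ z)
    have main : ∃ q ∈ L, s q * dist y q ≤ K * s y * d := by
      by_cases hp : s p ≤ K * s y
      · refine ⟨p, hpL, ?_⟩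
        rw [hpd]
        exact mul_le_mul_of_nonneg_right hp dist_nonneg
      · by_contra hcon
        push_neg at hcon
        have hsp : K * s y < s p := lt_of_not_ge hp
        have step : ∀ q ∈ L, dist q p < δ / 4 := by
          intro q hqL
          have hq : K * s y * d < s q * dist y q := hcon q hqL
          have htri : s q * s p * dist q p ≤ s q * s y * dist q y + s y * s p * dist y p := by
            have h1 := hmult γ hγ q p
            have h2 := hmult γ hγ q y
            have h3 := hmult γ hγ y p
            have := dist_triangle (γ q) (γ y) (γ p)
            rw [h1, h2, h3] at this
            linarith
          have e1 : s q * s y * dist q y ≤ s q * (s p / K) * dist q y := by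
            have hy : s y ≤ s p / K := (le_div_iff₀ hKpos).mpr (by nlinarith)
            have := mul_le_mul_of_nonneg_right
              (mul_le_mul_of_nonneg_left hy (le_of_lt (hs q))) (dist_nonneg (x := q) (y := y))
            linarith
          have e2 : s y * s p * d < s p * s q * dist y q / K := by
            have h' : s y * d < s q * dist y q / K := by
              rw [lt_div_iff₀ hKpos]
              nlinarith
            calc s y * s p * d = s p * (s y * d) := by ring
              _ < s p * (s q * dist y q / K) := mul_lt_mul_of_pos_left h' (hs p)
              _ = s p * s q * dist y q / K := by ring
          have e3 : s q * s p * dist q p < s q * s p * (2 * dist q y / K) := by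
            rw [← hpd] at htri
            have : s q * s p * dist q p < s q * (s p / K) * dist q y + s p * s q * dist y q / K := by
              linarith
            calc s q * s p * dist q p
                < s q * (s p / K) * dist q y + s p * s q * dist y q / K := this
              _ = s q * s p * (2 * dist q y / K) := by rw [dist_comm y q]; ring
          have hsqsp : 0 < s q * s p := mul_pos (hs q) (hs p)
          have e4 : dist q p < 2 * dist q y / K := (mul_lt_mul_iff_right₀ hsqsp).mp e3
          have e5 : 2 * dist q y / K ≤ 4 / K := by
            gcongr
            linarith [hdist2 q y]
          have e6 : 4 / K ≤ δ / 4 := by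
            have h16 : 0 < 16 / δ := by positivity
            calc (4 : ℝ) / K ≤ 4 / (16 / δ) := by
                  apply div_le_div_of_nonneg_left (by norm_num) h16 hKδ
              _ = δ / 4 := by field_simp; ring
          linarith
        have hA := step a haL
        have hB := step b hbL
        have hAB : dist a b < δ / 2 := by
          calc dist a b ≤ dist a p + dist p b := dist_triangle a p b
            _ = dist a p + dist b p := by rw [dist_comm p b]
            _ < δ / 4 + δ / 4 := by linarith
            _ = δ / 2 := by ring
        have : δ ≤ dist a b := le_trans (min_le_left _ _) (min_le_left _ _)
        linarith
    obtain ⟨q, hqL, hqle⟩ := main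
    have hγq : γ q ∈ L := by
      rw [← hLinv γ hγ]
      exact Set.mem_image_of_mem _ hqL
    calc Metric.infDist (γ y) L ≤ dist (γ y) (γ q) := Metric.infDist_le_dist_of_mem hγq
      _ = s y * s q * dist y q := hmult γ hγ y q
      _ = s y * (s q * dist y q) := by ring
      _ ≤ s y * (K * s y * d) := by
          exact mul_le_mul_of_nonneg_left hqle (le_of_lt (hs y))
      _ = K * (s y * s y) * d := by ring
      _ = K * lam γ y * d := by
          rw [← Real.mul_self_sqrt (le_of_lt (hlam_pos γ hγ y))]
  -- Lemma B: the multiplier of the inverse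
  have keyB : ∀ γ ∈ Γ, ∀ x, lam γ⁻¹ (γ x) * lam γ x = 1 := by
    intro γ hγ x
    have hγinv : γ⁻¹ ∈ Γ := inv_mem hγ
    set h : Metric.sphere (0 : EuclideanSpace ℝ (Fin (n + 1))) 1 → ℝ :=
      fun w => Real.sqrt (lam γ⁻¹ (γ w)) * Real.sqrt (lam γ w) with hhdef
    have hhpos : ∀ w, 0 < h w := fun w =>
      mul_pos (Real.sqrt_pos.mpr (hlam_pos γ⁻¹ hγinv (γ w))) (Real.sqrt_pos.mpr (hlam_pos γ hγ w))
    have pair : ∀ w₁ w₂, w₁ ≠ w₂ → h w₁ * h w₂ = 1 := by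
      intro w₁ w₂ hne
      have hd : dist w₁ w₂ ≠ 0 := dist_ne_zero.mpr hne
      have hid : γ⁻¹ (γ w₁) = w₁ := Equiv.symm_apply_apply γ w₁
      have hid2 : γ⁻¹ (γ w₂) = w₂ := Equiv.symm_apply_apply γ w₂
      have e1 := hmult γ⁻¹ hγinv (γ w₁) (γ w₂)
      rw [hid, hid2, hmult γ hγ w₁ w₂] at e1
      have : dist w₁ w₂ = (h w₁ * h w₂) * dist w₁ w₂ := by
        rw [hhdef]; dsimp only; linarith [e1]
      have := mul_right_cancel₀ hd (by linarith [this] : (h w₁ * h w₂) * dist w₁ w₂ = 1 * dist w₁ w₂)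
      linarith
    have hex : ∃ y z, y ≠ z ∧ y ≠ x ∧ z ≠ x := by
      by_cases h1 : x = a
      · exact ⟨b, c, hbc, by rw [h1]; exact hab.symm, by rw [h1]; exact hac.symm⟩
      · by_cases h2 : x = b
        · exact ⟨a, c, hac, by rw [h2]; exact hab, by rw [h2]; exact hbc.symm⟩
        · exact ⟨a, b, hab, fun h => h1 h.symm, fun h => h2 h.symm⟩
    obtain ⟨y, z, hyz, hyx, hzx⟩ := hex
    have p1 : h x * h y = 1 := pair x y (fun h => hyx h.symm)
    have p2 : h x * h z = 1 := pair x z (fun h => hzx h.symm)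
    have p3 : h y * h z = 1 := pair y z hyz
    have hx2 : h x * h x = 1 := by
      have hy0 := (hhpos y).ne'
      have hz0 := (hhpos z).ne'
      have : (h x * h y) * (h x * h z) = (h x * h x) * (h y * h z) := by ring
      rw [p1, p2, p3] at this
      simpa using this.symm
    have : h x = 1 := by
      nlinarith [hhpos x, hx2]
    calc lam γ⁻¹ (γ x) * lam γ x
        = (Real.sqrt (lam γ⁻¹ (γ x)) * Real.sqrt (lam γ⁻¹ (γ x)))
          * (Real.sqrt (lam γ x) * Real.sqrt (lam γ x)) := by
          rw [Real.mul_self_sqrt (le_of_lt (hlam_pos γ⁻¹ hγinv (γ x))),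
            Real.mul_self_sqrt (le_of_lt (hlam_pos γ hγ x))]
      _ = (h x) * (h x) := by rw [hhdef]; ring
      _ = 1 := by rw [this]; norm_num
  -- Lower bound counterpart of keyA
  have keyA' : ∀ γ ∈ Γ, ∀ y, lam γ y * Metric.infDist y L ≤ K * Metric.infDist (γ y) L := by
    intro γ hγ y
    have hγinv : γ⁻¹ ∈ Γ := inv_mem hγ
    have := keyA γ⁻¹ hγinv (γ y)
    rw [show γ⁻¹ (γ y) = y from Equiv.symm_apply_apply γ y] at this
    have hB := keyB γ hγ y
    have hlpos := hlam_pos γ hγ y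
    have hinvlam : lam γ⁻¹ (γ y) = 1 / lam γ y := by
      field_simp at hB ⊢
      linarith
    rw [hinvlam] at this
    have hdx0 : 0 ≤ Metric.infDist (γ y) L := Metric.infDist_nonneg
    calc lam γ y * Metric.infDist y L
        ≤ lam γ y * (K * (1 / lam γ y) * Metric.infDist (γ y) L) :=
          mul_le_mul_of_nonneg_left this (le_of_lt hlpos)
      _ = K * Metric.infDist (γ y) L := by field_simp
  -- Final assembly
  refine ⟨C₀ * K, by nlinarith, ?_⟩
  intro x hx
  have hx' : x ∈ ⋃ γ ∈ Γ, (γ : Equiv.Perm _) '' D := by rw [hcover]; exact hx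
  simp only [Set.mem_iUnion, Set.mem_image] at hx'
  obtain ⟨γ, hγ, y, hyD, hyx⟩ := hx'
  have hyΩ : y ∈ Lᶜ := hDsub hyD
  have hdy : 0 < Metric.infDist y L := (hLclosed.notMem_iff_infDist_pos hLne).mp hyΩ
  have hdx : 0 < Metric.infDist x L := (hLclosed.notMem_iff_infDist_pos hLne).mp hx
  have hlpos := hlam_pos γ hγ y
  have hinvy := hinv γ hγ y hyΩ
  rw [hyx] at hinvy
  -- exp (u x) = exp (u y) / lam γ y
  have hux : Real.exp (u x) = Real.exp (u y) / lam γ y := by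
    field_simp [hinvy]
    linarith [hinvy]
  obtain ⟨hlo, hhi⟩ := hbound y hyD
  have hA1 : Metric.infDist x L ≤ K * lam γ y * Metric.infDist y L := by
    rw [← hyx]; exact keyA γ hγ y
  have hA2 : lam γ y * Metric.infDist y L ≤ K * Metric.infDist x L := by
    rw [← hyx]; exact keyA' γ hγ y
  have hC₀0 : (0 : ℝ) < C₀ := by linarith
  constructor
  · rw [hux]
    have h1 : 1 / (C₀ * K * Metric.infDist x L) ≤ 1 / (C₀ * (lam γ y * Metric.infDist y L)) := by
      apply one_div_le_one_div_of_le
      · positivity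
      · calc C₀ * (lam γ y * Metric.infDist y L) ≤ C₀ * (K * Metric.infDist x L) :=
              mul_le_mul_of_nonneg_left hA2 (le_of_lt hC₀0)
          _ = C₀ * K * Metric.infDist x L := by ring
    calc 1 / (C₀ * K * Metric.infDist x L)
        ≤ 1 / (C₀ * (lam γ y * Metric.infDist y L)) := h1
      _ = (1 / (C₀ * Metric.infDist y L)) / lam γ y := by
          field_simp
      _ ≤ Real.exp (u y) / lam γ y := by gcongr
  · rw [hux]
    have h2 : Metric.infDist x L / K ≤ Metric.infDist y L * lam γ y := by
      rw [div_le_iff₀ hKpos]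
      calc Metric.infDist x L ≤ K * lam γ y * Metric.infDist y L := hA1
        _ = Metric.infDist y L * lam γ y * K := by ring
    calc Real.exp (u y) / lam γ y
        ≤ (C₀ / Metric.infDist y L) / lam γ y := by gcongr
      _ = C₀ / (Metric.infDist y L * lam γ y) := div_div _ _ _
      _ ≤ C₀ / (Metric.infDist x L / K) := by
          apply div_le_div_of_nonneg_left (le_of_lt hC₀0) (by positivity) h2
      _ = C₀ * K / Metric.infDist x L := div_div_eq_mul_div _ _ _
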